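/- arXiv:2507.01474 — 7 statements merged into one kernel-verified Lean document; each statement's English description precedes it below -/
import Mathlib

section
/- Let M : ℝ₊ → (0,∞) be non-decreasing and suppose there exist constants γ ∈ (0,1), δ ≥ γ/(1−γ), and s₁ > 1 such that M(s) ≤ s^γ and M(λs)/M(s) ≥ (log(λs)/log s)^{1+δ} for all λ ≥ 1 and s ≥ s₁. Then the function M_log(s) := M(s)/log(s/M(s)) is strictly increasing on [s₁,∞). -/
/-! Write `a = log s`, `b = log t` and `r = b / a > 1` for `s₁ ≤ s < t`. The bound `M ≤ s ^ γ`
gives `log M(s) ≤ γ a`, which turns the denominator growth `log(t/M(s)) / log(s/M(s))` into at most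
`1 + (r - 1)/(1 - γ)`; by Bernoulli this is below `r ^ (1/(1-γ)) ≤ r ^ (1+δ)`, while the
positive-increase condition makes the numerator grow by at least `r ^ (1+δ)`. -/

open Real

lemma sub_div_one_sub_lt_rpow {γ δ r : ℝ} (hγ0 : 0 < γ) (hγ1 : γ < 1) (hδ : γ / (1 - γ) ≤ δ)
    (hr : 1 < r) : (r - γ) / (1 - γ) < r ^ (1 + δ) := by
  have h1γ : 0 < 1 - γ := by linarith
  have hp : 1 < 1 / (1 - γ) := by rw [lt_div_iff₀ h1γ]; linarith
  have hexp : 1 / (1 - γ) ≤ 1 + δ := by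
    have : 1 / (1 - γ) = 1 + γ / (1 - γ) := by field_simp; ring
    linarith
  calc (r - γ) / (1 - γ) = 1 + 1 / (1 - γ) * (r - 1) := by field_simp; ring
    _ < (1 + (r - 1)) ^ (1 / (1 - γ)) :=
      one_add_mul_self_lt_rpow_one_add (by linarith) (by linarith) hp
    _ = r ^ (1 / (1 - γ)) := by rw [add_sub_cancel]
    _ ≤ r ^ (1 + δ) := rpow_le_rpow_of_exponent_le hr.le hexp

lemma sub_lt_rpow_mul_sub {γ δ a b m : ℝ} (hγ0 : 0 < γ) (hγ1 : γ < 1) (hδ : γ / (1 - γ) ≤ δ)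
    (ha : 0 < a) (hab : a < b) (hm : m ≤ γ * a) : b - m < (b / a) ^ (1 + δ) * (a - m) := by
  set r := b / a
  have hr : 1 < r := (one_lt_div ha).mpr hab
  have hb : b = r * a := (div_mul_cancel₀ b ha.ne').symm
  have h1γ : 0 < 1 - γ := by linarith
  have ham : 0 < a - m := by nlinarith
  calc b - m ≤ (r - γ) / (1 - γ) * (a - m) := by
        rw [div_mul_eq_mul_div, le_div_iff₀ h1γ]
        -- the slack is `(r - 1) * (γ a - m) ≥ 0`
        nlinarith
    _ < r ^ (1 + δ) * (a - m) :=
      mul_lt_mul_of_pos_right (sub_div_one_sub_lt_rpow hγ0 hγ1 hδ hr) ham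

lemma log_le_mul_log_of_le_rpow {x s γ : ℝ} (hx : 0 < x) (hs : 0 < s) (h : x ≤ s ^ γ) :
    log x ≤ γ * log s :=
  (log_le_log hx h).trans_eq (log_rpow hs γ)

/-- under a logarithmic positive-increase-type condition,
`M_log(s) = M(s)/log(s/M(s))` is strictly increasing on `[s₁,∞)`. -/
theorem stmt3 (M : ℝ → ℝ) (hMpos : ∀ s, 0 ≤ s → 0 < M s)
    (hmono : MonotoneOn M (Set.Ici (0:ℝ)))
    (γ δ s₁ : ℝ) (hγ0 : 0 < γ) (hγ1 : γ < 1) (hδ : γ / (1 - γ) ≤ δ) (hs₁ : 1 < s₁)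
    (hupper : ∀ s, s₁ ≤ s → M s ≤ s ^ γ)
    (hPI : ∀ lam : ℝ, 1 ≤ lam → ∀ s, s₁ ≤ s →
      (Real.log (lam * s) / Real.log s) ^ (1 + δ) ≤ M (lam * s) / M s) :
    StrictMonoOn (fun s => M s / Real.log (s / M s)) (Set.Ici s₁) := by
  intro s (hs : s₁ ≤ s) t (ht : s₁ ≤ t) hst
  have hs0 : 0 < s := by linarith
  have ht0 : 0 < t := by linarith
  have hMs := hMpos s hs0.le
  have hMt := hMpos t ht0.le
  have ha : 0 < log s := log_pos (by linarith)
  have hab : log s < log t := log_lt_log hs0 hst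
  have hms := log_le_mul_log_of_le_rpow hMs hs0 (hupper s hs)
  have hmt := log_le_mul_log_of_le_rpow hMt ht0 (hupper t ht)
  have hmm : log (M s) ≤ log (M t) := log_le_log hMs (hmono hs0.le ht0.le hst.le)
  have hgrowth : M s * (log t / log s) ^ (1 + δ) ≤ M t := by
    have h := hPI (t / s) ((one_le_div hs0).mpr hst.le) s hs
    rwa [div_mul_cancel₀ t hs0.ne', le_div_iff₀ hMs, mul_comm] at h
  have hkey := sub_lt_rpow_mul_sub hγ0 hγ1 hδ ha hab hms
  show M s / log (s / M s) < M t / log (t / M t)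
  rw [log_div hs0.ne' hMs.ne', log_div ht0.ne' hMt.ne',
    div_lt_div_iff₀ (by nlinarith) (by nlinarith)]
  calc M s * (log t - log (M t)) ≤ M s * (log t - log (M s)) := by gcongr
    _ < M s * ((log t / log s) ^ (1 + δ) * (log s - log (M s))) := by gcongr
    _ ≤ M t * (log s - log (M s)) := by
      rw [← mul_assoc]
      exact mul_le_mul_of_nonneg_right hgrowth (by nlinarith)
end

section
/- Let M : ℝ₊ → (0,∞) be non-decreasing and suppose there exist constants α > 0 and s₁ ≥ 0 such that M(s) ≤ e^{−1/α} s and M(λs)/M(s) ≥ λ^α for all λ ≥ 1 and s ≥ s₁. Then M_log(s) := M(s)/log(s/M(s)) is strictly increasing on [s₁,∞). -/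
/-- if `M(s) ≤ e^{-1/α} s` and `M(λs)/M(s) ≥ λ^α` for `λ ≥ 1`, `s ≥ s₁`,
then `M_log(s) = M(s)/log(s/M(s))` is strictly increasing on `[s₁,∞)`. -/
theorem stmt4 (M : ℝ → ℝ) (hMpos : ∀ s, 0 ≤ s → 0 < M s)
    (hmono : MonotoneOn M (Set.Ici (0:ℝ)))
    (α s₁ : ℝ) (hα : 0 < α) (hs₁ : 0 ≤ s₁)
    (hupper : ∀ s, s₁ ≤ s → M s ≤ Real.exp (-(1/α)) * s)
    (hPI : ∀ lam : ℝ, 1 ≤ lam → ∀ s, s₁ ≤ s → lam ^ α ≤ M (lam * s) / M s) :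
    StrictMonoOn (fun s => M s / Real.log (s / M s)) (Set.Ici s₁) := by
  intro x hx y hy hxy
  simp only [Set.mem_Ici] at hx hy
  have hx0 : (0:ℝ) ≤ x := le_trans hs₁ hx
  have hMx : 0 < M x := hMpos x hx0
  have hMy : 0 < M y := hMpos x hx0 |>.trans_le (hmono hx0 (le_trans hx0 hxy.le) hxy.le)
  have hxpos : 0 < x := by
    by_contra h
    push_neg at h
    have h1 := hupper x hx
    nlinarith [Real.exp_pos (-(1/α))]
  have hypos : 0 < y := hxpos.trans hxy
  set lam := y / x with hlam
  have hlam1 : 1 < lam := (one_lt_div hxpos).mpr hxy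
  have hlam0 : 0 < lam := lt_trans one_pos hlam1
  have hlx : lam * x = y := div_mul_cancel₀ y hxpos.ne'
  have hPIx := hPI lam hlam1.le x hx
  rw [hlx] at hPIx
  have hMyge : lam ^ α * M x ≤ M y := (le_div_iff₀ hMx).mp hPIx
  -- lower bounds on the logs
  have hexp : ∀ s, s₁ ≤ s → 0 < s → Real.exp (1/α) ≤ s / M s := by
    intro s hs hspos
    have h1 := hupper s hs
    rw [Real.exp_neg] at h1
    rw [le_div_iff₀ (hMpos s (hs₁.trans hs))]
    have hE := Real.exp_pos (1/α)
    calc Real.exp (1/α) * M s ≤ Real.exp (1/α) * ((Real.exp (1/α))⁻¹ * s) := by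
          exact mul_le_mul_of_nonneg_left h1 hE.le
      _ = s := by field_simp
  set a := Real.log (x / M x) with hadef
  set b := Real.log (y / M y) with hbdef
  have ha : 1/α ≤ a := by
    have := hexp x hx hxpos
    calc 1/α = Real.log (Real.exp (1/α)) := (Real.log_exp _).symm
      _ ≤ a := Real.log_le_log (Real.exp_pos _) this
  have hb : 1/α ≤ b := by
    have := hexp y hy hypos
    calc 1/α = Real.log (Real.exp (1/α)) := (Real.log_exp _).symm
      _ ≤ b := Real.log_le_log (Real.exp_pos _) this
  have hapos : 0 < a := lt_of_lt_of_le (by positivity) ha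
  have hbpos : 0 < b := lt_of_lt_of_le (by positivity) hb
  set L := Real.log lam with hLdef
  have hL : 0 < L := Real.log_pos hlam1
  have hLeq : L = Real.log y - Real.log x := by
    rw [hLdef, hlam, Real.log_div hypos.ne' hxpos.ne']
  have haeq : a = Real.log x - Real.log (M x) :=
    Real.log_div hxpos.ne' hMx.ne'
  have hbeq : b = Real.log y - Real.log (M y) :=
    Real.log_div hypos.ne' hMy.ne'
  -- upper bound for b
  have hlogMy : α * L + Real.log (M x) ≤ Real.log (M y) := by
    have h1 : Real.log (lam ^ α * M x) ≤ Real.log (M y) :=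
      Real.log_le_log (by positivity) hMyge
    rwa [Real.log_mul (by positivity) hMx.ne', Real.log_rpow hlam0] at h1
  have hbub : b ≤ a + (1 - α) * L := by
    rw [hbeq, haeq]
    linarith [hLeq]
  -- key inequality
  have hE : α * L + 1 < lam ^ α := by
    have h1 : α * L + 1 < Real.exp (α * L) := by
      have := Real.add_one_lt_exp (show α * L ≠ 0 by positivity)
      linarith
    have h2 : lam ^ α = Real.exp (α * L) := by
      rw [Real.rpow_def_of_pos hlam0, mul_comm]
    linarith [h2 ▸ h1]
  have hE1 : 0 < lam ^ α - 1 := by nlinarith [mul_pos hα hL]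
  have hkey : a + (1 - α) * L < lam ^ α * a := by
    have h2 : L < a * (lam ^ α - 1) := by
      have h3 : (1/α) * (α * L) < (1/α) * (lam ^ α - 1) :=
        mul_lt_mul_of_pos_left (by linarith) (by positivity)
      have h4 : (1/α) * (α * L) = L := by field_simp
      nlinarith [mul_le_mul_of_nonneg_right ha hE1.le]
    nlinarith [mul_pos hα hL]
  -- conclude
  show M x / a < M y / b
  rw [div_lt_div_iff₀ hapos hbpos]
  calc M x * b ≤ M x * (a + (1 - α) * L) := mul_le_mul_of_nonneg_left hbub hMx.le
    _ < M x * (lam ^ α * a) := mul_lt_mul_of_pos_left hkey hMx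
    _ = (lam ^ α * M x) * a := by ring
    _ ≤ M y * a := mul_le_mul_of_nonneg_right hMyge hapos.le
end

section
/- Let A generate an immediately differentiable C₀-semigroup (T(t)) on a Banach space X with C_T := sup_{0≤t≤1}‖T(t)‖, and suppose there exist C₀ > 0, t₀ ∈ (0,1] and a non-decreasing continuous K : ℝ₊ → ℝ₊ with t = O(K(t)) as t → ∞ such that ‖AT(t)‖ ≤ C₀ K(1/t) for all t ∈ (0,t₀]. Then there exists a constant c ∈ (0,1) such that ‖R(iη,A)‖ = O(1/K⁻¹(c|η|)) as |η| → ∞. -/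
/-- `R` is the (bounded) resolvent of the (unbounded) operator `A` at `lam`. -/
structure IsResolventAt {X : Type*} [NormedAddCommGroup X] [NormedSpace ℂ X]
    (A : X →ₗ.[ℂ] X) (lam : ℂ) (R : X →L[ℂ] X) : Prop where
  mem : ∀ x : X, R x ∈ A.domain
  right_inv : ∀ x : X, lam • R x - A ⟨R x, mem x⟩ = x
  left_inv : ∀ y : A.domain, R (lam • (y : X) - A y) = (y : X)

/-! For `y = R(iη) x`, differentiating `τ ↦ e^{-iητ} T(τ) y` gives
`‖y‖ ≤ ‖T(t) y‖ + C_T t ‖x‖`, while `iη T(t) y = AT(t) y + T(t) x` gives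
`|η| ‖T(t) y‖ ≤ ‖AT(t)‖ ‖y‖ + C_T ‖x‖`. For `t = 2 / K⁻¹(c|η|)` we have
`‖AT(t)‖ ≤ C₀ K(K⁻¹(c|η|) / 2) ≤ C₀ c |η| ≤ |η| / 2`, hence `‖y‖ ≤ 2 C_T (1/|η| + t) ‖x‖`;
finally `t = O(K t)` gives `K⁻¹(u) = O(u)`, so the `1/|η|` term is also `O(1/K⁻¹(c|η|))`. -/

open Set Filter

theorem exists_norm_le_of_continuousOn {α 𝕜 E F : Type*} [TopologicalSpace α]
    [NontriviallyNormedField 𝕜] [NormedAddCommGroup E] [NormedSpace 𝕜 E] [CompleteSpace E]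
    [NormedAddCommGroup F] [NormedSpace 𝕜 F] {s : Set α} (hs : IsCompact s)
    {T : α → E →L[𝕜] F} (hT : ∀ x, ContinuousOn (fun t => T t x) s) :
    ∃ M, ∀ t ∈ s, ‖T t‖ ≤ M := by
  obtain ⟨M, hM⟩ := banach_steinhaus (g := fun t : s => T t) fun x => by
    obtain ⟨C, hC⟩ := hs.exists_bound_of_continuousOn (hT x)
    exact ⟨C, fun t => hC t t.2⟩
  exact ⟨M, fun t ht => hM ⟨t, ht⟩⟩

theorem norm_mul_norm_apply_le {X : Type*} [NormedAddCommGroup X] [NormedSpace ℂ X]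
    {S D : X →L[ℂ] X} {lam : ℂ} {x y v : X} (hv : lam • y - v = x) (hD : D y = S v) :
    ‖lam‖ * ‖S y‖ ≤ ‖D‖ * ‖y‖ + ‖S‖ * ‖x‖ := by
  have : lam • S y = D y + S x := by rw [hD, ← hv, map_sub, map_smul]; abel
  calc ‖lam‖ * ‖S y‖ = ‖D y + S x‖ := by rw [← norm_smul, this]
    _ ≤ ‖D‖ * ‖y‖ + ‖S‖ * ‖x‖ := by
        grw [norm_add_le, D.le_opNorm, S.le_opNorm]

section Semigroup

variable {X : Type*} [NormedAddCommGroup X] [NormedSpace ℂ X] {T : ℝ → X →L[ℂ] X}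

theorem eq_apply_of_hasDerivAt_orbit
    (hTadd : ∀ s t : ℝ, 0 ≤ s → 0 ≤ t → T (s + t) = (T s).comp (T t)) {y v : X}
    (hv : HasDerivWithinAt (fun t : ℝ => T t y) v (Ici 0) 0) {t : ℝ} (ht : 0 ≤ t) {z : X}
    (hz : HasDerivAt (fun τ : ℝ => T τ y) z t) : z = T t v := by
  -- both are the right derivative of `s ↦ T (t + s) y` at `0`
  have hshift : HasDerivAt (fun s : ℝ => t + s) 1 0 := by
    simpa using (hasDerivAt_id (0:ℝ)).const_add t
  have h₁ : HasDerivWithinAt (fun s : ℝ => T (t + s) y) z (Ici 0) 0 := by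
    have := HasDerivAt.scomp (0:ℝ) (by simpa using hz) hshift
    simpa [Function.comp_def] using this.hasDerivWithinAt
  have h₂ : HasDerivWithinAt (fun s : ℝ => T (t + s) y) (T t v) (Ici 0) 0 := by
    refine (((T t).restrictScalars ℝ).hasFDerivAt.comp_hasDerivWithinAt 0 hv).congr
      (fun s hs => ?_) ?_
    · simp [hTadd t s ht hs]
    · rw [hTadd t 0 ht le_rfl]; rfl
  exact (uniqueDiffOn_Ici 0 0 self_mem_Ici).eq_deriv _ h₁ h₂

variable [CompleteSpace X]

theorem sub_exp_smul_orbit_eq_integral (hT0 : T 0 = 1)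
    (hTcont : ∀ x : X, ContinuousOn (fun t : ℝ => T t x) (Ici 0)) {lam : ℂ} {x y v : X}
    (hv : lam • y - v = x) (hy : ∀ τ : ℝ, 0 < τ → HasDerivAt (fun τ : ℝ => T τ y) (T τ v) τ)
    {t : ℝ} (ht : 0 ≤ t) :
    y - Complex.exp (-lam * t) • T t y = ∫ τ in (0:ℝ)..t, Complex.exp (-lam * τ) • T τ x := by
  have hexp : ∀ τ : ℝ, HasDerivAt (fun τ : ℝ => Complex.exp (-lam * τ))
      (-lam * Complex.exp (-lam * τ)) τ := fun τ => by
    simpa [mul_comm] using (((hasDerivAt_id (τ:ℂ)).const_mul (-lam)).cexp).comp_ofReal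
  have hcont : ∀ z : X, ContinuousOn (fun τ : ℝ => Complex.exp (-lam * τ) • T τ z) (Icc 0 t) :=
    fun z => (by fun_prop : Continuous fun τ : ℝ => Complex.exp (-lam * τ)).continuousOn.smul
      ((hTcont z).mono Icc_subset_Ici_self)
  have hderiv : ∀ τ ∈ Ioo 0 t, HasDerivAt (fun τ : ℝ => -(Complex.exp (-lam * τ) • T τ y))
      (Complex.exp (-lam * τ) • T τ x) τ := fun τ hτ => by
    refine ((hexp τ).smul (hy τ hτ.1)).neg.congr_deriv ?_
    rw [← hv, map_sub, map_smul]
    module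
  rw [intervalIntegral.integral_eq_sub_of_hasDeriv_right_of_le ht (hcont y).neg
    (fun τ hτ => (hderiv τ hτ).hasDerivWithinAt) ((hcont x).intervalIntegrable_of_Icc ht)]
  simp [hT0]
  abel

theorem norm_le_norm_orbit_add (hT0 : T 0 = 1)
    (hTcont : ∀ x : X, ContinuousOn (fun t : ℝ => T t x) (Ici 0)) {η : ℝ} {x y v : X}
    (hv : (Complex.I * η) • y - v = x)
    (hy : ∀ τ : ℝ, 0 < τ → HasDerivAt (fun τ : ℝ => T τ y) (T τ v) τ)
    {t M : ℝ} (ht : 0 ≤ t) (hM : ∀ τ ∈ Icc 0 t, ‖T τ‖ ≤ M) :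
    ‖y‖ ≤ ‖T t y‖ + M * ‖x‖ * t := by
  have hexp : ∀ τ : ℝ, ‖Complex.exp (-(Complex.I * η) * τ)‖ = 1 := fun τ => by
    simp [Complex.norm_exp]
  have hint : ‖∫ τ in (0:ℝ)..t, Complex.exp (-(Complex.I * η) * τ) • T τ x‖ ≤ M * ‖x‖ * t := by
    have := intervalIntegral.norm_integral_le_of_norm_le_const (C := M * ‖x‖)
      (f := fun τ : ℝ => Complex.exp (-(Complex.I * η) * τ) • T τ x) fun τ hτ => by
        rw [uIoc_of_le ht] at hτ
        rw [norm_smul, hexp, one_mul]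
        exact (T τ).le_of_opNorm_le (hM τ (Ioc_subset_Icc_self hτ)) x
    rwa [sub_zero, abs_of_nonneg ht] at this
  calc ‖y‖ = ‖Complex.exp (-(Complex.I * η) * t) • T t y
        + ∫ τ in (0:ℝ)..t, Complex.exp (-(Complex.I * η) * τ) • T τ x‖ := by
        rw [← sub_exp_smul_orbit_eq_integral hT0 hTcont hv hy ht, add_sub_cancel]
    _ ≤ ‖T t y‖ + M * ‖x‖ * t := by
        grw [norm_add_le, norm_smul, hexp, one_mul, hint]

theorem norm_resolvent_le {AT : ℝ → X →L[ℂ] X} {A : X →ₗ.[ℂ] X}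
    (hT0 : T 0 = 1) (hTadd : ∀ s t : ℝ, 0 ≤ s → 0 ≤ t → T (s + t) = (T s).comp (T t))
    (hTcont : ∀ x : X, ContinuousOn (fun t : ℝ => T t x) (Ici 0))
    (hgen : ∀ y : A.domain, HasDerivWithinAt (fun t : ℝ => T t (y : X)) (A y) (Ici 0) 0)
    (hAT : ∀ t : ℝ, 0 < t → ∀ x : X, HasDerivAt (fun τ : ℝ => T τ x) (AT t x) t)
    {η : ℝ} (hη : η ≠ 0) {R : X →L[ℂ] X} (hR : IsResolventAt A (Complex.I * η) R)
    {t M : ℝ} (ht : 0 < t) (hM0 : 0 ≤ M) (hM : ∀ τ ∈ Icc 0 t, ‖T τ‖ ≤ M)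
    (hATt : ‖AT t‖ ≤ |η| / 2) :
    ‖R‖ ≤ 2 * M * (1 / |η| + t) := by
  have hη0 : 0 < |η| := abs_pos.2 hη
  refine R.opNorm_le_bound (by positivity) fun x => ?_
  set y := R x
  set v := A ⟨y, hR.mem x⟩
  have hv : (Complex.I * η) • y - v = x := hR.right_inv x
  have hATy : ∀ τ : ℝ, 0 < τ → AT τ y = T τ v := fun τ hτ =>
    eq_apply_of_hasDerivAt_orbit hTadd (hgen _) hτ.le (hAT τ hτ y)
  have h₁ : ‖y‖ ≤ ‖T t y‖ + M * ‖x‖ * t :=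
    norm_le_norm_orbit_add hT0 hTcont hv (fun τ hτ => hATy τ hτ ▸ hAT τ hτ y) ht.le hM
  have h₂ : |η| * ‖T t y‖ ≤ ‖AT t‖ * ‖y‖ + ‖T t‖ * ‖x‖ := by
    simpa using norm_mul_norm_apply_le hv (hATy t ht)
  have hATy' : ‖AT t‖ * ‖y‖ ≤ |η| / 2 * ‖y‖ := by gcongr
  have hTx : ‖T t‖ * ‖x‖ ≤ M * ‖x‖ := by gcongr; exact hM t ⟨ht.le, le_rfl⟩
  have key : |η| * ‖y‖ ≤ |η| * (2 * M * (1 / |η| + t) * ‖x‖) := by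
    have : |η| * (2 * M * (1 / |η| + t) * ‖x‖) = 2 * (M * ‖x‖) + 2 * |η| * (M * ‖x‖ * t) := by
      field_simp
    rw [this]
    nlinarith
  exact le_of_mul_le_mul_left key hη0

end Semigroup

/-- The generalized inverse `K⁻¹ u = inf {s ≥ 0 | u ≤ K s}`, which is `0` when this set is
empty. -/
noncomputable def generalizedInverse (K : ℝ → ℝ) (u : ℝ) : ℝ := sInf {s : ℝ | 0 ≤ s ∧ u ≤ K s}

section GeneralizedInverse

variable {K : ℝ → ℝ} {u s : ℝ}

theorem generalizedInverse_le (hs : 0 ≤ s) (hus : u ≤ K s) : generalizedInverse K u ≤ s :=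
  csInf_le ⟨0, fun _ h => h.1⟩ ⟨hs, hus⟩

theorem apply_lt_of_lt_generalizedInverse (hs : 0 ≤ s) (h : s < generalizedInverse K u) :
    K s < u :=
  lt_of_not_ge fun hus => (generalizedInverse_le hs hus).not_gt h

theorem le_generalizedInverse (hK : MonotoneOn K (Ici 0)) (hs : 0 ≤ s) (hKs : K s < u)
    {r : ℝ} (hr : 0 ≤ r) (hur : u ≤ K r) : s ≤ generalizedInverse K u :=
  le_csInf ⟨r, hr, hur⟩ fun _ ⟨hr', hur'⟩ =>
    le_of_not_gt fun hr's => (hKs.trans_le hur').not_ge (hK hr' hs hr's.le)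

theorem le_apply_mul_of_le_mul_apply {C t₁ : ℝ} (hK : ∀ t, t₁ ≤ t → t ≤ C * K t) (hC : 0 < C)
    (hu : t₁ ≤ C * u) : u ≤ K (C * u) :=
  le_of_mul_le_mul_left (hK _ hu) hC

theorem generalizedInverse_mem_Icc (hK : MonotoneOn K (Ici 0)) {C t₁ : ℝ}
    (hKgrowth : ∀ t, t₁ ≤ t → t ≤ C * K t) (hC : 0 < C) (hu : t₁ ≤ C * u) (hu0 : 0 ≤ u)
    (hs : 0 ≤ s) (hKs : K s < u) : generalizedInverse K u ∈ Icc s (C * u) :=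
  have hCu : 0 ≤ C * u := mul_nonneg hC.le hu0
  have hKCu := le_apply_mul_of_le_mul_apply hKgrowth hC hu
  ⟨le_generalizedInverse hK hs hKs hCu hKCu, generalizedInverse_le hCu hKCu⟩

end GeneralizedInverse

theorem stmt13_general {X : Type*} [NormedAddCommGroup X] [NormedSpace ℂ X] [CompleteSpace X]
    (T : ℝ → X →L[ℂ] X)
    (hT0 : T 0 = 1)
    (hTadd : ∀ s t : ℝ, 0 ≤ s → 0 ≤ t → T (s + t) = (T s).comp (T t))
    (hTcont : ∀ x : X, ContinuousOn (fun t : ℝ => T t x) (Set.Ici 0))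
    (A : X →ₗ.[ℂ] X)
    (hgen : ∀ y : A.domain, HasDerivWithinAt (fun t : ℝ => T t (y : X)) (A y) (Set.Ici 0) 0)
    -- immediate differentiability, with derivatives given by bounded operators `AT t`:
    (AT : ℝ → X →L[ℂ] X)
    (hAT : ∀ t : ℝ, 0 < t → ∀ x : X, HasDerivAt (fun τ : ℝ => T τ x) (AT t x) t)
    (b : ℝ)
    (Res : ℝ → X →L[ℂ] X)
    (hRes : ∀ η : ℝ, b ≤ |η| → IsResolventAt A (Complex.I * η) (Res η))
    (K : ℝ → ℝ)
    (hKmono : MonotoneOn K (Set.Ici (0:ℝ)))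
    (hKO : ∃ C₁ t₁ : ℝ, 0 < C₁ ∧ ∀ t, t₁ ≤ t → t ≤ C₁ * K t)
    (C₀ t₀ : ℝ) (hC₀ : 0 < C₀) (ht₀0 : 0 < t₀) (ht₀1 : t₀ ≤ 1)
    (hATK : ∀ t : ℝ, 0 < t → t ≤ t₀ → ‖AT t‖ ≤ C₀ * K (1 / t)) :
    ∃ c : ℝ, 0 < c ∧ c < 1 ∧ ∃ C s' : ℝ, 0 < C ∧ ∀ η : ℝ, s' ≤ |η| →
      ‖Res η‖ ≤ C * (1 / sInf {s : ℝ | 0 ≤ s ∧ c * |η| ≤ K s}) := by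
  obtain ⟨C₁, t₁, hC₁, hK₁⟩ := hKO
  obtain ⟨M, hM⟩ := exists_norm_le_of_continuousOn (isCompact_Icc (a := (0:ℝ)) (b := 1))
    fun x => (hTcont x).mono Icc_subset_Ici_self
  set c := 1 / (2 * (C₀ + 1))
  have hc : 0 < c := by positivity
  have hcC₀ : C₀ * c ≤ 1 / 2 := by
    rw [mul_one_div, div_le_div_iff₀ (by positivity) two_pos]
    linarith
  refine ⟨c, hc, by rw [div_lt_one (by positivity)]; linarith, 2 * max M 1 * (C₁ * c + 2), ?_⟩
  obtain ⟨s', hs'⟩ := eventually_atTop.1 <| (eventually_ge_atTop b).and <|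
    (eventually_gt_atTop 0).and <|
    ((tendsto_id.const_mul_atTop hc).eventually_gt_atTop (K (2 / t₀))).and
    ((tendsto_id.const_mul_atTop (mul_pos hC₁ hc)).eventually_ge_atTop t₁)
  refine ⟨s', by positivity, fun η hη => ?_⟩
  obtain ⟨hbη, hη0, hKt₀, ht₁⟩ := hs' |η| hη
  change ‖Res η‖ ≤ _ * (1 / generalizedInverse K (c * |η|))
  set S := generalizedInverse K (c * |η|)
  obtain ⟨hSge, hSle⟩ : S ∈ Icc (2 / t₀) (C₁ * (c * |η|)) :=
    generalizedInverse_mem_Icc hKmono hK₁ hC₁ (by simpa [mul_assoc] using ht₁) (by positivity)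
      (by positivity) hKt₀
  have hS : 0 < S := lt_of_lt_of_le (by positivity) hSge
  have ht : 2 / S ≤ t₀ := by rwa [div_le_comm₀ hS ht₀0]
  have hATS : ‖AT (2 / S)‖ ≤ |η| / 2 := calc
    ‖AT (2 / S)‖ ≤ C₀ * K (S / 2) := by simpa using hATK (2 / S) (by positivity) ht
    _ ≤ C₀ * (c * |η|) := by
      gcongr
      exact (apply_lt_of_lt_generalizedInverse (by positivity) (half_lt_self hS)).le
    _ ≤ |η| / 2 := by nlinarith
  calc ‖Res η‖ ≤ 2 * max M 1 * (1 / |η| + 2 / S) :=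
        norm_resolvent_le hT0 hTadd hTcont hgen hAT (abs_pos.1 hη0) (hRes η hbη) (by positivity)
          (by positivity) (fun τ hτ => (hM τ ⟨hτ.1, hτ.2.trans (ht.trans ht₀1)⟩).trans
            (le_max_left _ _)) hATS
    _ ≤ 2 * max M 1 * (C₁ * c + 2) * (1 / S) := by
      have hη_inv : 1 / |η| ≤ C₁ * c / S := by
        rw [div_le_div_iff₀ hη0 hS]
        linarith
      rw [mul_assoc _ (C₁ * c + 2)]
      gcongr
      calc 1 / |η| + 2 / S ≤ C₁ * c / S + 2 / S := add_le_add_left hη_inv _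
        _ = (C₁ * c + 2) * (1 / S) := by ring

/-- if the generator of an immediately differentiable `C₀`-semigroup
satisfies `‖AT(t)‖ ≤ C₀ K(1/t)` for `t ∈ (0,t₀]`, where `K` is non-decreasing,
continuous, with `t = O(K(t))` as `t → ∞`, then there is `c ∈ (0,1)` with
`‖R(iη,A)‖ = O(1/K⁻¹(c|η|))` as `|η| → ∞`. -/
theorem stmt13 {X : Type*} [NormedAddCommGroup X] [NormedSpace ℂ X] [CompleteSpace X]
    (T : ℝ → X →L[ℂ] X)
    (hT0 : T 0 = 1)
    (hTadd : ∀ s t : ℝ, 0 ≤ s → 0 ≤ t → T (s + t) = (T s).comp (T t))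
    (hTcont : ∀ x : X, ContinuousOn (fun t : ℝ => T t x) (Set.Ici 0))
    (A : X →ₗ.[ℂ] X)
    (hgen : ∀ y : A.domain, HasDerivWithinAt (fun t : ℝ => T t (y : X)) (A y) (Set.Ici 0) 0)
    -- immediate differentiability, with derivatives given by bounded operators `AT t`:
    (AT : ℝ → X →L[ℂ] X)
    (hAT : ∀ t : ℝ, 0 < t → ∀ x : X, HasDerivAt (fun τ : ℝ => T τ x) (AT t x) t)
    (b : ℝ) (hb : 0 ≤ b)
    (Res : ℝ → X →L[ℂ] X)
    (hRes : ∀ η : ℝ, b ≤ |η| → IsResolventAt A (Complex.I * η) (Res η))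
    (K : ℝ → ℝ) (hK0 : ∀ t, 0 ≤ t → 0 ≤ K t)
    (hKmono : MonotoneOn K (Set.Ici (0:ℝ)))
    (hKcont : ContinuousOn K (Set.Ici (0:ℝ)))
    (hKO : ∃ C₁ t₁ : ℝ, 0 < C₁ ∧ ∀ t, t₁ ≤ t → t ≤ C₁ * K t)
    (C₀ t₀ : ℝ) (hC₀ : 0 < C₀) (ht₀0 : 0 < t₀) (ht₀1 : t₀ ≤ 1)
    (hATK : ∀ t : ℝ, 0 < t → t ≤ t₀ → ‖AT t‖ ≤ C₀ * K (1 / t)) :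
    ∃ c : ℝ, 0 < c ∧ c < 1 ∧ ∃ C s' : ℝ, 0 < C ∧ ∀ η : ℝ, s' ≤ |η| →
      ‖Res η‖ ≤ C * (1 / sInf {s : ℝ | 0 ≤ s ∧ c * |η| ≤ K s}) :=
  stmt13_general T hT0 hTadd hTcont A hgen AT hAT b Res hRes K hKmono hKO C₀ t₀ hC₀ ht₀0 ht₀1 hATK
end

section
/- Let b > 0 and M : [b,∞) → (0,∞) be non-decreasing. Define M_inf(s) := inf_{λ>1} M(λs)/log λ. Then: (a) M_inf is non-decreasing; (b) M_inf(s) → ∞ as s → ∞ if and only if log s = o(M(s)) as s → ∞. -/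
/-- for non-decreasing `M : [b,∞) → (0,∞)` with `b > 0` and
`M_inf(s) := inf_{λ>1} M(λs)/log λ`: (a) `M_inf` is non-decreasing;
(b) `M_inf(s) → ∞` iff `log s = o(M(s))` as `s → ∞`. -/
theorem stmt15 (b : ℝ) (hb : 0 < b) (M : ℝ → ℝ)
    (hMpos : ∀ s, b ≤ s → 0 < M s)
    (hmono : MonotoneOn M (Set.Ici b)) :
    MonotoneOn (fun s => ⨅ l : Set.Ioi (1:ℝ), M ((l : ℝ) * s) / Real.log l)
      (Set.Ici b) ∧
    (Filter.Tendsto (fun s => ⨅ l : Set.Ioi (1:ℝ), M ((l : ℝ) * s) / Real.log l)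
        Filter.atTop Filter.atTop ↔
      ∀ ε > (0:ℝ), ∃ s₀ : ℝ, ∀ s, s₀ ≤ s → Real.log s ≤ ε * M s) := by
  set f : ℝ → ℝ := fun s => ⨅ l : Set.Ioi (1:ℝ), M ((l : ℝ) * s) / Real.log l with hfdef
  have hterm : ∀ s, b ≤ s → ∀ l : Set.Ioi (1:ℝ),
      0 ≤ M ((l : ℝ) * s) / Real.log (l : ℝ) := by
    intro s hs l
    have hl : (1:ℝ) < l := l.2
    have hspos : 0 < s := hb.trans_le hs
    have hls : b ≤ (l : ℝ) * s := le_trans hs (by nlinarith)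
    exact le_of_lt (div_pos (hMpos _ hls) (Real.log_pos hl))
  have hbdd : ∀ s, b ≤ s →
      BddBelow (Set.range fun l : Set.Ioi (1:ℝ) => M ((l : ℝ) * s) / Real.log (l : ℝ)) := by
    intro s hs
    exact ⟨0, by rintro x ⟨l, rfl⟩; exact hterm s hs l⟩
  have hmonoF : MonotoneOn f (Set.Ici b) := by
    intro s hs t ht hst
    refine ciInf_mono (hbdd s hs) ?_
    intro l
    have hl : (1:ℝ) < l := l.2
    have hspos : 0 < s := hb.trans_le hs
    have h1 : b ≤ (l : ℝ) * s := le_trans hs (by nlinarith)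
    have h2 : b ≤ (l : ℝ) * t := le_trans h1 (by nlinarith)
    have hM : M ((l : ℝ) * s) ≤ M ((l : ℝ) * t) :=
      hmono h1 h2 (by nlinarith)
    exact div_le_div_of_nonneg_right hM (Real.log_pos hl).le |>.trans_eq rfl
  refine ⟨hmonoF, ?_, ?_⟩
  · -- forward: M_inf → ∞ implies log s = o(M s)
    intro htend ε hε
    obtain ⟨s₁', hs₁'⟩ := Filter.eventually_atTop.mp (Filter.tendsto_atTop.mp htend (2/ε))
    set s₁ : ℝ := max s₁' (max b 1) with hs₁def
    have hs₁b : b ≤ s₁ := le_trans (le_max_left b 1) (le_max_right _ _)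
    have hs₁1 : (1:ℝ) ≤ s₁ := le_trans (le_max_right b 1) (le_max_right _ _)
    have hs₁pos : 0 < s₁ := lt_of_lt_of_le one_pos hs₁1
    have hC : 2/ε ≤ f s₁ := hs₁' s₁ (le_max_left _ _)
    have key : ∀ s, s₁ < s → (2/ε) * (Real.log s - Real.log s₁) ≤ M s := by
      intro s hs
      have hspos : 0 < s := hs₁pos.trans hs
      have hl : (1:ℝ) < s / s₁ := (one_lt_div hs₁pos).2 hs
      have h1 : f s₁ ≤ M ((s/s₁) * s₁) / Real.log (s/s₁) :=
        ciInf_le (hbdd s₁ hs₁b) ⟨s/s₁, hl⟩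
      rw [div_mul_cancel₀ _ (ne_of_gt hs₁pos),
        Real.log_div (ne_of_gt hspos) (ne_of_gt hs₁pos)] at h1
      have hlogpos : 0 < Real.log s - Real.log s₁ := by
        have := Real.log_lt_log hs₁pos hs
        linarith
      have h2 : 2/ε ≤ M s / (Real.log s - Real.log s₁) := le_trans hC h1
      exact (le_div_iff₀ hlogpos).1 h2
    refine ⟨max (s₁^2) (s₁+1), fun s hs => ?_⟩
    have hgt : s₁ < s := lt_of_lt_of_le (by linarith) (le_trans (le_max_right _ _) hs)
    have hkey := key s hgt
    have hsq : s₁^2 ≤ s := le_trans (le_max_left _ _) hs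
    have hlogs : 2 * Real.log s₁ ≤ Real.log s := by
      have h := Real.log_le_log (by positivity) hsq
      rw [Real.log_pow] at h
      push_cast at h
      linarith
    have hmul := mul_le_mul_of_nonneg_left hkey hε.le
    have heq : ε * ((2/ε) * (Real.log s - Real.log s₁)) =
        2 * (Real.log s - Real.log s₁) := by
      field_simp
    rw [heq] at hmul
    linarith
  · -- reverse: log s = o(M s) implies M_inf → ∞
    intro h
    rw [Filter.tendsto_atTop]
    intro K
    set K' : ℝ := max K 1 with hK'def
    have hK' : 0 < K' := lt_of_lt_of_le one_pos (le_max_right _ _)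
    obtain ⟨s₀, hs₀⟩ := h (1/K') (by positivity)
    rw [Filter.eventually_atTop]
    refine ⟨max s₀ (max b 1), fun s hs => ?_⟩
    have hsb : b ≤ s := le_trans (le_trans (le_max_left b 1) (le_max_right _ _)) hs
    have hs1 : (1:ℝ) ≤ s := le_trans (le_trans (le_max_right b 1) (le_max_right _ _)) hs
    have hss₀ : s₀ ≤ s := le_trans (le_max_left _ _) hs
    have hfs : K' ≤ f s := by
      apply le_ciInf
      intro l
      have hl : (1:ℝ) < l := l.2
      have hls1 : s ≤ (l : ℝ) * s := by nlinarith
      have hlog : Real.log ((l : ℝ) * s) ≤ (1/K') * M ((l : ℝ) * s) :=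
        hs₀ _ (le_trans hss₀ hls1)
      rw [le_div_iff₀ (Real.log_pos hl)]
      have hsplit : Real.log ((l : ℝ) * s) = Real.log l + Real.log s :=
        Real.log_mul (by linarith) (by linarith)
      have hlogspos : 0 ≤ Real.log s := Real.log_nonneg hs1
      have hmul := mul_le_mul_of_nonneg_left hlog hK'.le
      have heq : K' * ((1/K') * M ((l : ℝ) * s)) = M ((l : ℝ) * s) := by
        field_simp
      rw [heq, hsplit] at hmul
      nlinarith
    exact le_trans (le_max_left K 1) hfs
end

section
/- Let b > 0 and M : [b,∞) → (0,∞) be non-decreasing and right-continuous. Then M_inf(s) := inf_{λ>1} M(λs)/log λ is right-continuous on [b,∞). -/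
/-- if `M : [b,∞) → (0,∞)` is non-decreasing and right-continuous,
then `M_inf(s) := inf_{λ>1} M(λs)/log λ` is right-continuous on `[b,∞)`. -/
theorem stmt17 (b : ℝ) (hb : 0 < b) (M : ℝ → ℝ)
    (hMpos : ∀ s, b ≤ s → 0 < M s)
    (hmono : MonotoneOn M (Set.Ici b))
    (hrc : ∀ s, b ≤ s → ContinuousWithinAt M (Set.Ici s) s) :
    ∀ s, b ≤ s → ContinuousWithinAt
      (fun σ => ⨅ l : Set.Ioi (1:ℝ), M ((l : ℝ) * σ) / Real.log l) (Set.Ici s) s := by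
  intro s hs
  set f : ℝ → ℝ := fun σ => ⨅ l : Set.Ioi (1:ℝ), M ((l : ℝ) * σ) / Real.log l with hf
  have hbmul : ∀ σ, b ≤ σ → ∀ l : Set.Ioi (1:ℝ), b ≤ (l : ℝ) * σ := by
    intro σ hσ l
    have hl1 : (1:ℝ) < l := l.2
    nlinarith [hb.trans_le hσ]
  have bdd : ∀ σ, b ≤ σ →
      BddBelow (Set.range fun l : Set.Ioi (1:ℝ) => M ((l : ℝ) * σ) / Real.log l) := by
    intro σ hσ
    refine ⟨0, ?_⟩
    rintro x ⟨l, rfl⟩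
    exact le_of_lt (div_pos (hMpos _ (hbmul σ hσ l)) (Real.log_pos l.2))
  have hmonof : ∀ σ τ, b ≤ σ → σ ≤ τ → f σ ≤ f τ := by
    intro σ τ hσ hστ
    refine le_ciInf fun l => ?_
    have hl1 : (1:ℝ) < l := l.2
    have h1 : (l:ℝ) * σ ≤ (l:ℝ) * τ := by nlinarith
    calc f σ ≤ M ((l:ℝ) * σ) / Real.log l := ciInf_le (bdd σ hσ) l
      _ ≤ M ((l:ℝ) * τ) / Real.log l :=
        (div_le_div_iff_of_pos_right (Real.log_pos hl1)).mpr
          (hmono (hbmul σ hσ l) (hbmul τ (hσ.trans hστ) l) h1)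
  rw [ContinuousWithinAt]
  refine tendsto_order.2 ⟨?_, ?_⟩
  · intro a ha
    filter_upwards [self_mem_nhdsWithin] with σ hσ
    exact ha.trans_le (hmonof s σ hs hσ)
  · intro a ha
    obtain ⟨l, hl⟩ := exists_lt_of_ciInf_lt ha
    have hl1 : (1:ℝ) < l := l.2
    have hbls : b ≤ (l:ℝ) * s := hbmul s hs l
    have hlpos : (0:ℝ) < l := lt_trans one_pos hl1
    have hmap : Filter.Tendsto (fun σ => (l:ℝ) * σ) (nhdsWithin s (Set.Ici s))
        (nhdsWithin ((l:ℝ) * s) (Set.Ici ((l:ℝ) * s))) := by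
      refine tendsto_nhdsWithin_of_tendsto_nhds_of_eventually_within _
        (((continuous_const.mul continuous_id).tendsto s).mono_left nhdsWithin_le_nhds) ?_
      filter_upwards [self_mem_nhdsWithin] with σ hσ
      exact mul_le_mul_of_nonneg_left hσ hlpos.le
    have hM : Filter.Tendsto (fun σ => M ((l:ℝ) * σ)) (nhdsWithin s (Set.Ici s))
        (nhds (M ((l:ℝ) * s))) := Filter.Tendsto.comp (hrc _ hbls) hmap
    have hdiv : Filter.Tendsto (fun σ => M ((l:ℝ) * σ) / Real.log l)
        (nhdsWithin s (Set.Ici s)) (nhds (M ((l:ℝ) * s) / Real.log l)) := hM.div_const _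
    filter_upwards [hdiv.eventually_lt_const hl,
      self_mem_nhdsWithin] with σ h1 h2
    exact lt_of_le_of_lt (ciInf_le (bdd σ (hs.trans h2)) l) h1
end

section
/- Let b > 0 and M : [b,∞) → (0,∞) be non-decreasing, continuous, and satisfy log s = o(M(s)) as s → ∞. Then M_inf(s) := inf_{λ>1} M(λs)/log λ is continuous on [b,∞); moreover, for each s > b there exist 1 < λ₁ < λ₂ such that M_inf(σ) = min_{λ₁ ≤ λ ≤ λ₂} M(λσ)/log λ for all σ ∈ [b,s], i.e., the infimum is attained on a compact λ-interval uniformly for σ ∈ [b,s]. -/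
open Set Real Filter

/-!
Write `g_σ(λ) = M(λσ)/log λ` and fix `s > b`. Put `C = M(e s)`, so that `g_σ(e) ≤ C` for
every `σ ∈ [b,s]`. Near `λ = 1` the denominator vanishes while `M(λσ) ≥ M(b) > 0`, and for
large `λ` the hypothesis `log = o(M)` forces `g_σ(λ) > C`, uniformly in `σ ≥ b`. Hence there is
one compact interval `[λ₁, λ₂] ∋ e` outside of which every `g_σ`, `σ ∈ [b,s]`, exceeds its value
at `e`, and the infimum over `λ > 1` is a minimum over `[λ₁, λ₂]`. Continuity of `M_inf` then
follows from the continuity of a minimum over a fixed compact set of a jointly continuous family.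
-/

theorem IsCompact.exists_isLeast_image_of_le {α β : Type*} [TopologicalSpace α] [LinearOrder β]
    [TopologicalSpace β] [ClosedIicTopology β] {S K : Set α} {g : α → β} {x₀ : α}
    (hK : IsCompact K) (hKS : K ⊆ S) (hg : ContinuousOn g K) (hx₀ : x₀ ∈ K)
    (hout : ∀ y ∈ S \ K, g x₀ ≤ g y) : ∃ x ∈ K, IsLeast (g '' S) (g x) := by
  obtain ⟨x, hxK, hmin⟩ := hK.exists_isMinOn ⟨x₀, hx₀⟩ hg
  refine ⟨x, hxK, mem_image_of_mem g (hKS hxK), ?_⟩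
  rintro _ ⟨y, hyS, rfl⟩
  by_cases hyK : y ∈ K
  · exact hmin hyK
  · exact (hmin hx₀).trans (hout y ⟨hyS, hyK⟩)

theorem IsLeast.image_of_subset {α β : Type*} [Preorder β] {s t : Set α} {g : α → β} {x : α}
    (h : IsLeast (g '' t) (g x)) (hst : s ⊆ t) (hx : x ∈ s) : IsLeast (g '' s) (g x) :=
  ⟨mem_image_of_mem g hx, fun _ hy => h.2 (image_mono hst hy)⟩

theorem continuousOn_Ici_of_forall_continuousOn_Icc {α β : Type*} [LinearOrder α]
    [TopologicalSpace α] [OrderTopology α] [NoMaxOrder α] [TopologicalSpace β] {f : α → β}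
    {b : α} (h : ∀ s, b < s → ContinuousOn f (Icc b s)) : ContinuousOn f (Ici b) := by
  refine continuousOn_of_locally_continuousOn fun x hx => ?_
  obtain ⟨s, hxs⟩ := exists_gt x
  exact ⟨Iio s, isOpen_Iio, hxs,
    (h s (lt_of_le_of_lt hx hxs)).mono fun y hy => ⟨hy.1, le_of_lt hy.2⟩⟩

section DivLog

variable {b : ℝ} {M : ℝ → ℝ}

theorem lt_div_log_of_log_lt (hb : 0 < b) (hmono : MonotoneOn M (Ici b)) {C σ l : ℝ}
    (hC : 0 < C) (hσ : b ≤ σ) (hl : 1 < l) (hlog : log l < M b / C) :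
    C < M (l * σ) / log l := by
  have hlσ : b ≤ l * σ := hσ.trans (le_mul_of_one_le_left (hb.trans_le hσ).le hl.le)
  rw [lt_div_iff₀ (log_pos hl)]
  calc C * log l < M b := by rwa [lt_div_iff₀' hC] at hlog
    _ ≤ M (l * σ) := hmono self_mem_Ici hlσ hlσ

theorem eventually_lt_div_log (hb : 0 < b)
    (hsmall : ∀ ε > (0:ℝ), ∃ s₀ : ℝ, ∀ s, s₀ ≤ s → log s ≤ ε * M s) {C : ℝ} (hC : 0 < C) :
    ∀ᶠ l in atTop, ∀ σ, b ≤ σ → C < M (l * σ) / log l := by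
  -- With `ε = 1/(2C)`, `M(lσ) ≥ 2C (log l + log σ)`, which beats `C log l` once `log l > -2 log b`.
  obtain ⟨s₀, hs₀⟩ := hsmall (1 / (2 * C)) (by positivity)
  refine eventually_atTop.2 ⟨max (s₀ / b) (exp (1 + 2 * |log b|)), fun l hl σ hσ => ?_⟩
  have hl0 : 0 < l := (exp_pos _).trans_le ((le_max_right _ _).trans hl)
  have hσ0 : 0 < σ := hb.trans_le hσ
  have hlogl : 1 + 2 * |log b| ≤ log l := by
    rw [← log_exp (1 + 2 * |log b|)]
    exact log_le_log (exp_pos _) ((le_max_right _ _).trans hl)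
  have hs₀lσ : s₀ ≤ l * σ := by
    have : s₀ ≤ l * b := by rw [← div_le_iff₀ hb]; exact (le_max_left _ _).trans hl
    exact this.trans (mul_le_mul_of_nonneg_left hσ hl0.le)
  have hM : 2 * C * (log l + log σ) ≤ M (l * σ) := by
    have := hs₀ _ hs₀lσ
    rwa [log_mul hl0.ne' hσ0.ne', div_mul_eq_mul_div, one_mul, le_div_iff₀' (by positivity)] at this
  have hlogσ : log b ≤ log σ := log_le_log hb hσ
  rw [lt_div_iff₀ (by linarith [abs_nonneg (log b)])]
  nlinarith [neg_abs_le (log b)]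

/- `IsCompact.continuous_sInf` needs a globally continuous family; the clamps give one that agrees
with `M(lσ)/log l` on `[b, ∞) × [l₁, ∞)`. -/
theorem continuous_div_log_max (hcont : ContinuousOn M (Ici b)) {l₁ : ℝ} (hl₁ : 1 < l₁) :
    Continuous fun p : ℝ × ℝ => M (max b (p.2 * p.1)) / log (max l₁ p.2) := by
  have hM : Continuous fun x => M (max b x) :=
    hcont.comp_continuous (continuous_const.max continuous_id) fun x => le_max_left b x
  refine (hM.comp (continuous_snd.mul continuous_fst)).div
    ((continuous_const.max continuous_snd).log fun p => ?_) fun p => ?_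
  all_goals
    linarith [lt_max_of_lt_left (c := p.2) hl₁, log_pos (lt_max_of_lt_left (c := p.2) hl₁)]

theorem eqOn_div_log_max (hb : 0 < b) {σ l₁ : ℝ} (hσ : b ≤ σ) (hl₁ : 1 < l₁) :
    EqOn (fun l => M (max b (l * σ)) / log (max l₁ l)) (fun l => M (l * σ) / log l) (Ici l₁) :=
  fun l hl => by
    have hlσ : b ≤ l * σ :=
      hσ.trans (le_mul_of_one_le_left (hb.trans_le hσ).le (hl₁.trans_le hl).le)
    simp only [max_eq_right hlσ, max_eq_right (mem_Ici.1 hl)]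

theorem exists_Icc_isLeast_div_log (hb : 0 < b) (hMpos : ∀ s, b ≤ s → 0 < M s)
    (hmono : MonotoneOn M (Ici b)) (hcont : ContinuousOn M (Ici b))
    (hsmall : ∀ ε > (0:ℝ), ∃ s₀ : ℝ, ∀ s, s₀ ≤ s → log s ≤ ε * M s) {s : ℝ}
    (hs : b ≤ s) :
    ∃ l₁ l₂ : ℝ, 1 < l₁ ∧ l₁ < l₂ ∧ ∀ σ ∈ Icc b s, ∃ l ∈ Icc l₁ l₂,
      IsLeast ((fun l => M (l * σ) / log l) '' Ioi 1) (M (l * σ) / log l) := by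
  have he_mul : ∀ {σ}, b ≤ σ → b ≤ exp 1 * σ := fun hσ =>
    hσ.trans (le_mul_of_one_le_left (hb.trans_le hσ).le (one_le_exp zero_le_one))
  set C := M (exp 1 * s)
  have hC : 0 < C := hMpos _ (he_mul hs)
  obtain ⟨L, hL⟩ := eventually_atTop.1 (eventually_lt_div_log hb hsmall hC)
  set l₁ := exp (min 1 (M b / C))
  set l₂ := max L (exp 2)
  have hl₁ : 1 < l₁ := one_lt_exp_iff.2 (lt_min one_pos (div_pos (hMpos b le_rfl) hC))
  have hel₁ : l₁ ≤ exp 1 := exp_le_exp.2 (min_le_left _ _)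
  have hel₂ : exp 1 < l₂ := (exp_lt_exp.2 one_lt_two).trans_le (le_max_right _ _)
  refine ⟨l₁, l₂, hl₁, hel₁.trans_lt hel₂, fun σ hσ => ?_⟩
  have hg : ContinuousOn (fun l => M (l * σ) / log l) (Icc l₁ l₂) :=
    ((continuous_div_log_max hcont hl₁).comp (Continuous.prodMk_right σ)).continuousOn.congr
      fun l hl => (eqOn_div_log_max hb hσ.1 hl₁ hl.1).symm
  refine isCompact_Icc.exists_isLeast_image_of_le (fun l hl => hl₁.trans_le hl.1) hg
    ⟨hel₁, hel₂.le⟩ fun l ⟨hl1, hl⟩ => ?_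
  have he : M (exp 1 * σ) / log (exp 1) ≤ C := by
    rw [log_exp, div_one]
    exact hmono (he_mul hσ.1) (he_mul hs) (mul_le_mul_of_nonneg_left hσ.2 (exp_pos 1).le)
  refine he.trans (le_of_lt ?_)
  rcases not_and_or.1 hl with h | h
  · refine lt_div_log_of_log_lt hb hmono hC hσ.1 hl1 ?_
    calc log l < log l₁ := log_lt_log (zero_lt_one.trans hl1) (not_le.1 h)
      _ ≤ M b / C := by rw [log_exp]; exact min_le_right _ _
  · exact hL l ((le_max_left _ _).trans (not_le.1 h).le) σ hσ.1

theorem div_log_eq_iInf_of_isLeast {σ l : ℝ}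
    (h : IsLeast ((fun l => M (l * σ) / log l) '' Ioi 1) (M (l * σ) / log l)) :
    M (l * σ) / log l = ⨅ l : Ioi (1:ℝ), M (l * σ) / log l :=
  h.csInf_eq.symm.trans sInf_image'

theorem continuousOn_iInf_div_log (hb : 0 < b) (hcont : ContinuousOn M (Ici b))
    {s l₁ l₂ : ℝ} (hl₁ : 1 < l₁)
    (hatt : ∀ σ ∈ Icc b s, ∃ l ∈ Icc l₁ l₂,
      IsLeast ((fun l => M (l * σ) / log l) '' Ioi 1) (M (l * σ) / log l)) :
    ContinuousOn (fun σ => ⨅ l : Ioi (1:ℝ), M (l * σ) / log l) (Icc b s) := by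
  refine ((isCompact_Icc (a := l₁) (b := l₂)).continuous_sInf
    (f := fun σ l => M (max b (l * σ)) / log (max l₁ l))
    (continuous_div_log_max hcont hl₁)).continuousOn.congr fun σ hσ => ?_
  obtain ⟨l, hl, hleast⟩ := hatt σ hσ
  have hIcc : Icc l₁ l₂ ⊆ Ioi 1 := fun l hl => hl₁.trans_le hl.1
  rw [← div_log_eq_iInf_of_isLeast hleast, ← (hleast.image_of_subset hIcc hl).csInf_eq]
  exact congrArg sInf (image_congr ((eqOn_div_log_max hb hσ.1 hl₁).mono Icc_subset_Ici_self)).symm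

end DivLog

/-- if `M : [b,∞) → (0,∞)` is non-decreasing, continuous, and
`log s = o(M(s))`, then `M_inf(s) := inf_{λ>1} M(λs)/log λ` is continuous on
`[b,∞)`; moreover, for each `s > b` the infimum is attained on a compact
`λ`-interval `[λ₁,λ₂] ⊂ (1,∞)` uniformly for `σ ∈ [b,s]`. -/
theorem stmt18 (b : ℝ) (hb : 0 < b) (M : ℝ → ℝ)
    (hMpos : ∀ s, b ≤ s → 0 < M s)
    (hmono : MonotoneOn M (Set.Ici b))
    (hcont : ContinuousOn M (Set.Ici b))
    (hsmall : ∀ ε > (0:ℝ), ∃ s₀ : ℝ, ∀ s, s₀ ≤ s → Real.log s ≤ ε * M s) :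
    ContinuousOn (fun σ => ⨅ l : Set.Ioi (1:ℝ), M ((l : ℝ) * σ) / Real.log l)
      (Set.Ici b) ∧
    ∀ s, b < s → ∃ lam₁ lam₂ : ℝ, 1 < lam₁ ∧ lam₁ < lam₂ ∧
      ∀ σ ∈ Set.Icc b s, ∃ lam ∈ Set.Icc lam₁ lam₂,
        M (lam * σ) / Real.log lam =
          ⨅ l : Set.Ioi (1:ℝ), M ((l : ℝ) * σ) / Real.log l := by
  have hatt {s : ℝ} (hs : b < s) :=
    exists_Icc_isLeast_div_log hb hMpos hmono hcont hsmall hs.le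
  refine ⟨continuousOn_Ici_of_forall_continuousOn_Icc fun s hs => ?_, fun s hs => ?_⟩
  · obtain ⟨l₁, l₂, hl₁, -, hleast⟩ := hatt hs
    exact continuousOn_iInf_div_log hb hcont hl₁ hleast
  · obtain ⟨l₁, l₂, hl₁, hl₁₂, hleast⟩ := hatt hs
    exact ⟨l₁, l₂, hl₁, hl₁₂, fun σ hσ =>
      (hleast σ hσ).imp fun l h => ⟨h.1, div_log_eq_iInf_of_isLeast h.2⟩⟩
end

section
/- Let b > 0, t > 0, and M : [b,∞) → (0,∞) be non-decreasing, continuous, with M(s) → ∞ as s → ∞ and M_inf(s) := inf_{λ>1} M(λs)/log λ satisfying M_inf(b) ≤ 1/t, where M_inf is non-decreasing, continuous, and tends to ∞. Let R := M_inf⁻¹(1/t) (left-inverse). Then sup_{s ≥ b} s e^{−t M(s)} ≤ R; that is, sup_{s≥b} s e^{−tM(s)} ≤ M_inf⁻¹(1/t). -/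
/-- with `M_inf(s) := inf_{λ>1} M(λs)/log λ` non-decreasing,
continuous, tending to `∞`, and `M_inf(b) ≤ 1/t`, one has
`sup_{s ≥ b} s e^{−t M(s)} ≤ M_inf⁻¹(1/t)` (left-inverse). -/
theorem stmt19 (b t : ℝ) (hb : 0 < b) (ht : 0 < t) (M : ℝ → ℝ)
    (hMpos : ∀ s, b ≤ s → 0 < M s)
    (hmono : MonotoneOn M (Set.Ici b))
    (hcont : ContinuousOn M (Set.Ici b))
    (htop : Filter.Tendsto M Filter.atTop Filter.atTop)
    (hMinfMono : MonotoneOn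
      (fun s => ⨅ l : Set.Ioi (1:ℝ), M ((l : ℝ) * s) / Real.log l) (Set.Ici b))
    (hMinfCont : ContinuousOn
      (fun s => ⨅ l : Set.Ioi (1:ℝ), M ((l : ℝ) * s) / Real.log l) (Set.Ici b))
    (hMinfTop : Filter.Tendsto
      (fun s => ⨅ l : Set.Ioi (1:ℝ), M ((l : ℝ) * s) / Real.log l)
      Filter.atTop Filter.atTop)
    (hMb : (⨅ l : Set.Ioi (1:ℝ), M ((l : ℝ) * b) / Real.log l) ≤ 1 / t) :
    ∀ s, b ≤ s → s * Real.exp (-(t * M s)) ≤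
      sInf {x : ℝ | b ≤ x ∧
        1 / t ≤ ⨅ l : Set.Ioi (1:ℝ), M ((l : ℝ) * x) / Real.log l} := by
  intro s hs
  set S : Set ℝ := {x : ℝ | b ≤ x ∧
      1 / t ≤ ⨅ l : Set.Ioi (1:ℝ), M ((l : ℝ) * x) / Real.log l} with hS
  -- S is nonempty
  have hSne : S.Nonempty := by
    have h1 := hMinfTop.eventually_ge_atTop (1 / t)
    rcases (h1.and (Filter.eventually_ge_atTop b)).exists with ⟨x, hx1, hx2⟩
    exact ⟨x, hx2, hx1⟩
  set R : ℝ := sInf S with hR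
  have hbR : b ≤ R := le_csInf hSne fun x hx => hx.1
  rcases le_or_gt s R with hcase | hcase
  · -- trivial case
    have h1 : Real.exp (-(t * M s)) ≤ 1 := by
      rw [Real.exp_le_one_iff]
      have := hMpos s hs
      nlinarith
    calc s * Real.exp (-(t * M s)) ≤ s * 1 := by
          apply mul_le_mul_of_nonneg_left h1 (le_trans hb.le hs)
      _ = s := mul_one s
      _ ≤ R := hcase
  · -- s > R : show s e^{-tM s} ≤ R
    have key : ∀ x ∈ S, x < s → s * Real.exp (-(t * M s)) ≤ x := by
      intro x hx hxs
      obtain ⟨hbx, hinf⟩ := hx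
      have hx0 : 0 < x := lt_of_lt_of_le hb hbx
      have hl1 : (1:ℝ) < s / x := (one_lt_div hx0).mpr hxs
      have hbdd : BddBelow (Set.range (fun l : Set.Ioi (1:ℝ) => M ((l : ℝ) * x) / Real.log l)) := by
        refine ⟨0, ?_⟩
        rintro y ⟨⟨l, hl⟩, rfl⟩
        have hl' : (1:ℝ) < l := hl
        have hlx : b ≤ l * x := le_trans hbx (by nlinarith)
        exact div_nonneg (hMpos _ hlx).le (Real.log_nonneg hl'.le)
      have hle := ciInf_le hbdd (⟨s / x, hl1⟩ : Set.Ioi (1:ℝ))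
      have hsx : (s / x) * x = s := div_mul_cancel₀ s hx0.ne'
      rw [hsx] at hle
      have hL : 0 < Real.log (s / x) := Real.log_pos hl1
      have h2 : 1 / t ≤ M s / Real.log (s / x) := le_trans hinf hle
      have h3 : Real.log (s / x) ≤ t * M s := by
        rw [div_le_div_iff₀ ht hL] at h2
        linarith
      have h4 : Real.exp (-(t * M s)) ≤ Real.exp (-(Real.log (s / x))) :=
        Real.exp_le_exp.mpr (by linarith)
      have h5 : Real.exp (-(Real.log (s / x))) = x / s := by
        rw [Real.exp_neg, Real.exp_log (by positivity)]
        field_simp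
      have hs0 : 0 < s := lt_of_lt_of_le hb hs
      calc s * Real.exp (-(t * M s)) ≤ s * (x / s) := by
            rw [← h5]; exact mul_le_mul_of_nonneg_left h4 hs0.le
        _ = x := by field_simp
    -- conclude via ε-argument
    refine le_of_forall_pos_le_add fun ε hε => ?_
    obtain ⟨x, hxS, hxlt⟩ := exists_lt_of_csInf_lt hSne
      (show R < R + min ε (s - R) by
        have : 0 < min ε (s - R) := lt_min hε (by linarith)
        linarith)
    have hxs : x < s := lt_of_lt_of_le hxlt (by
      have := min_le_right ε (s - R); linarith)
    have := key x hxS hxs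
    have : s * Real.exp (-(t * M s)) ≤ x := this
    have hxε : x < R + ε := lt_of_lt_of_le hxlt (by
      have := min_le_left ε (s - R); linarith)
    linarith
end
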